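/- arXiv:1909.03810 — 3 statements merged into one kernel-verified Lean document; each statement's English description precedes it below -/
import Mathlib

section
/- Let m ∈ ℕ, a ∈ ℂ, r > 0, and let F, G : ℂ → ℂ^{m×m} be matrix-valued functions analytic on an open neighborhood of the closed disk {λ : |λ − a| ≤ r}. Assume that for every λ with |λ − a| = r the matrix F(λ) is invertible and ‖G(λ)F(λ)⁻¹‖ < 1, where ‖·‖ is the operator norm induced by the Euclidean norm on ℂ^m. Then the scalar analytic functions det F and det(F + G) are not identically zero near the disk, do not vanish on the circle |λ − a| = r, and have the same number of zeros, counted with multiplicities (the sum of the orders of the zeros), in the open disk {λ : |λ − a| < r}. -/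
open MeasureTheory Filter Matrix Set
open scoped Matrix.Norms.L2Operator

noncomputable section

namespace MatrixSturmLiouville

/-- `f` has a zero of order exactly `d` at `z₀`. -/
def ZeroOrder (f : ℂ → ℂ) (z₀ : ℂ) (d : ℕ) : Prop :=
  ∃ g : ℂ → ℂ, AnalyticAt ℂ g z₀ ∧ g z₀ ≠ 0 ∧ ∀ᶠ z in nhds z₀, f z = (z - z₀) ^ d * g z

/-- `lam` is a nondecreasing enumeration (indexed by `n ≥ 1` and `k : Fin m`, ordered
lexicographically) of the zeros of `Δ`, all of them real, counted with multiplicity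
(the multiplicity of a zero being its order). -/
def IsEigenvalueEnumeration (m : ℕ) (Δ : ℂ → ℂ) (lam : ℕ → Fin m → ℝ) : Prop :=
  (∀ n : ℕ, 1 ≤ n → ∀ k : Fin m, Δ (lam n k) = 0) ∧
  (∀ n₁ n₂ : ℕ, ∀ k₁ k₂ : Fin m, 1 ≤ n₁ → (n₁ < n₂ ∨ (n₁ = n₂ ∧ k₁ < k₂)) →
    lam n₁ k₁ ≤ lam n₂ k₂) ∧
  (∀ μ : ℂ, Δ μ = 0 →
    ∃ d : ℕ, ZeroOrder Δ μ d ∧ {q : ℕ × Fin m | 1 ≤ q.1 ∧ (lam q.1 q.2 : ℂ) = μ}.ncard = d)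

/-- `Y` (with `x`-derivative `Yd`) solves `-Y'' + Q Y = λ Y` on `[0, π]`, in the
integrated (Carathéodory) sense, entrywise. -/
def IsMatrixSol {m : ℕ} (Q : ℝ → Matrix (Fin m) (Fin m) ℂ) (l : ℂ)
    (Y Yd : ℝ → Matrix (Fin m) (Fin m) ℂ) : Prop :=
  ∀ i j : Fin m,
    (∀ x ∈ Set.Icc (0:ℝ) Real.pi, Y x i j = Y 0 i j + ∫ t in (0:ℝ)..x, Yd t i j) ∧
    (∀ x ∈ Set.Icc (0:ℝ) Real.pi,
      Yd x i j = Yd 0 i j + ∫ t in (0:ℝ)..x, ((Q t * Y t) i j - l * Y t i j))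

/-- `Q` has Hermitian values a.e. on `(0, π)` and all entries in `L²(0, π)`. -/
def IsL2Hermitian {m : ℕ} (Q : ℝ → Matrix (Fin m) (Fin m) ℂ) : Prop :=
  (∀ᵐ x ∂(volume.restrict (Set.Ioc (0:ℝ) Real.pi)), (Q x)ᴴ = Q x) ∧
  ∀ i j : Fin m, MemLp (fun x => Q x i j) 2 (volume.restrict (Set.Ioc (0:ℝ) Real.pi))

/-- the orthogonal projector `T = diag (I_p, 0)`. -/
def projT (m p : ℕ) : Matrix (Fin m) (Fin m) ℂ :=
  Matrix.of fun i j => if i = j ∧ (i : ℕ) < p then 1 else 0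

/-- embed a `p × p` matrix as the top-left block of an `m × m` matrix. -/
def embedTop (m p : ℕ) (h : Matrix (Fin p) (Fin p) ℂ) : Matrix (Fin m) (Fin m) ℂ :=
  Matrix.of fun i j =>
    if hij : (i : ℕ) < p ∧ (j : ℕ) < p then h ⟨i, hij.1⟩ ⟨j, hij.2⟩ else 0

/-- embed an `(m-p) × (m-p)` matrix as the bottom-right block of an `m × m` matrix. -/
def embedBot (m p : ℕ) (P : Matrix (Fin (m - p)) (Fin (m - p)) ℂ) :
    Matrix (Fin m) (Fin m) ℂ :=
  Matrix.of fun i j =>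
    if hij : p ≤ (i : ℕ) ∧ p ≤ (j : ℕ) then
      P ⟨(i : ℕ) - p, by have := i.isLt; omega⟩ ⟨(j : ℕ) - p, by have := j.isLt; omega⟩
    else 0

/-- the top-left `p × p` block. -/
def block11 {m : ℕ} (p : ℕ) (hp : p ≤ m) (A : Matrix (Fin m) (Fin m) ℂ) :
    Matrix (Fin p) (Fin p) ℂ :=
  Matrix.of fun i j => A (Fin.castLE hp i) (Fin.castLE hp j)

/-- the bottom-right `(m-p) × (m-p)` block. -/
def block22 {m : ℕ} (p : ℕ) (A : Matrix (Fin m) (Fin m) ℂ) :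
    Matrix (Fin (m - p)) (Fin (m - p)) ℂ :=
  Matrix.of fun i j =>
    A ⟨p + (i : ℕ), by have := i.isLt; omega⟩ ⟨p + (j : ℕ), by have := j.isLt; omega⟩

/-- `ω = (1/2) ∫₀^π Q(x) dx`, entrywise. -/
def omegaMat {m : ℕ} (Q : ℝ → Matrix (Fin m) (Fin m) ℂ) : Matrix (Fin m) (Fin m) ℂ :=
  Matrix.of fun i j => (1 / 2 : ℂ) * ∫ x in (0:ℝ)..Real.pi, Q x i j

/-- the boundary form `V(Y) = T (Y'(π) - H Y(π)) - T^⊥ Y(π)` built from the values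
`Ypi = Y(π)`, `Ydpi = Y'(π)`, for general projector `T` and matrix `H`. -/
def Vform {m : ℕ} (T H : Matrix (Fin m) (Fin m) ℂ) (Ypi Ydpi : Matrix (Fin m) (Fin m) ℂ) :
    Matrix (Fin m) (Fin m) ℂ :=
  T * (Ydpi - H * Ypi) - (1 - T) * Ypi

/-- minus the sum of the residues `Res μ` over the *distinct* values `μ = lam n k`,
`k` ranging over the indices satisfying `pred`. -/
def weightSum {m : ℕ} (Res : ℂ → Matrix (Fin m) (Fin m) ℂ) (lam : ℕ → Fin m → ℝ)
    (pred : Fin m → Prop) [DecidablePred pred] (n : ℕ) : Matrix (Fin m) (Fin m) ℂ :=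
  -∑ μ ∈ (Finset.univ.filter pred).image (fun k => lam n k), Res (μ : ℂ)

/-- `y` (with derivative `yd`) solves `-y'' + q y = λ y` on `[0, π]`
in the integrated sense. -/
def IsScalarSol (q : ℝ → ℝ) (l : ℂ) (y yd : ℝ → ℂ) : Prop :=
  (∀ x ∈ Set.Icc (0:ℝ) Real.pi, y x = y 0 + ∫ t in (0:ℝ)..x, yd t) ∧
  (∀ x ∈ Set.Icc (0:ℝ) Real.pi, yd x = yd 0 + ∫ t in (0:ℝ)..x, ((q t : ℂ) * y t - l * y t))

/-- the principal branch of `√λ` for real `λ`. -/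
def sqrtC (x : ℝ) : ℂ := (x : ℂ) ^ ((1 : ℂ) / 2)




/-- entry evaluation as a continuous linear map -/
def entryCLM (m : ℕ) (i j : Fin m) : Matrix (Fin m) (Fin m) ℂ →L[ℂ] ℂ :=
  LinearMap.toContinuousLinearMap
    { toFun := fun M => M i j
      map_add' := fun M N => rfl
      map_smul' := fun c M => rfl }

lemma analyticOnNhd_det {m : ℕ} {E : Type*} [NormedAddCommGroup E] [NormedSpace ℂ E]
    {A : E → Matrix (Fin m) (Fin m) ℂ} {s : Set E} (hA : AnalyticOnNhd ℂ A s) :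
    AnalyticOnNhd ℂ (fun x => (A x).det) s := by
  have hentry : ∀ i j : Fin m, AnalyticOnNhd ℂ (fun x => A x i j) s := fun i j =>
    (entryCLM m i j).comp_analyticOnNhd hA
  have : (fun x => (A x).det) =
      fun x => ∑ σ : Equiv.Perm (Fin m), ((Equiv.Perm.sign σ : ℤ) : ℂ) *
        ∏ i, A x (σ i) i := by
    funext x
    simp [Matrix.det_apply, Units.smul_def, zsmul_eq_mul]
  rw [this]
  apply Finset.analyticOnNhd_fun_sum
  intro σ _
  exact analyticOnNhd_const.mul <| Finset.analyticOnNhd_fun_prod Finset.univ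
    (fun i _ => hentry (σ i) i)

open Classical in
def orderNat (f : ℂ → ℂ) (z : ℂ) : ℕ :=
  if h : AnalyticAt ℂ f z then (analyticOrderAt f z).toNat else 0

open Classical in
def zeroCount (f : ℂ → ℂ) (a : ℂ) (r : ℝ) : ℕ :=
  if h : {z | z ∈ Metric.closedBall a r ∧ f z = 0}.Finite then
    ∑ z ∈ h.toFinset, orderNat f z
  else 0

lemma zeroCount_eq {f : ℂ → ℂ} {a : ℂ} {r : ℝ}
    (h : {z | z ∈ Metric.closedBall a r ∧ f z = 0}.Finite) :
    zeroCount f a r = ∑ z ∈ h.toFinset, orderNat f z := dif_pos h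

lemma circleIntegral_add' {f g : ℂ → ℂ} {c : ℂ} {R : ℝ} (hf : CircleIntegrable f c R)
    (hg : CircleIntegrable g c R) :
    (∮ z in C(c, R), (f z + g z)) = (∮ z in C(c, R), f z) + ∮ z in C(c, R), g z := by
  simp only [circleIntegral, smul_add]
  exact intervalIntegral.integral_add ((circleIntegrable_iff R).mp hf)
    ((circleIntegrable_iff R).mp hg)

lemma circleIntegrable_sum' {ι : Type*} (s : Finset ι) {f : ι → ℂ → ℂ} {c : ℂ} {R : ℝ}
    (hf : ∀ i ∈ s, CircleIntegrable (f i) c R) :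
    CircleIntegrable (fun z => ∑ i ∈ s, f i z) c R := by
  induction s using Finset.cons_induction with
  | empty => simpa using circleIntegrable_const (0 : ℂ) c R
  | cons a s ha ih =>
    rw [Finset.forall_mem_cons] at hf
    simp only [Finset.sum_cons]
    exact hf.1.add (ih hf.2)

lemma circleIntegral_finset_sum' {ι : Type*} (s : Finset ι) {f : ι → ℂ → ℂ} {c : ℂ} {R : ℝ}
    (hf : ∀ i ∈ s, CircleIntegrable (f i) c R) :
    (∮ z in C(c, R), (∑ i ∈ s, f i z)) = ∑ i ∈ s, ∮ z in C(c, R), f i z := by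
  induction s using Finset.cons_induction with
  | empty => simp [circleIntegral]
  | cons a s ha ih =>
    rw [Finset.forall_mem_cons] at hf
    simp only [Finset.sum_cons]
    rw [circleIntegral_add' hf.1 (circleIntegrable_sum' s hf.2), ih hf.2]


lemma not_eventually_zero {f : ℂ → ℂ} {a : ℂ} {r R : ℝ} (hr : 0 < r) (hrR : r < R)
    (hf : AnalyticOnNhd ℂ f (Metric.ball a R))
    (hsph : ∀ z : ℂ, dist z a = r → f z ≠ 0) :
    ∀ z ∈ Metric.ball a R, ¬ (∀ᶠ w in nhds z, f w = 0) := by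
  intro z hz hev
  have heq : EqOn f 0 (Metric.ball a R) :=
    hf.eqOn_zero_of_preconnected_of_eventuallyEq_zero (convex_ball a R).isPreconnected hz
      (by filter_upwards [hev] with w hw using hw)
  have hd : dist (a + (r : ℂ)) a = r := by
    simp [dist_eq_norm, Complex.norm_real, abs_of_pos hr]
  have hw : (a + (r : ℂ)) ∈ Metric.ball a R := by
    simp only [Metric.mem_ball, hd]; exact hrR
  exact hsph _ hd (heq hw)

lemma zeroOrder_orderNat {f : ℂ → ℂ} {z : ℂ} (hA : AnalyticAt ℂ f z)
    (hne : ¬ (∀ᶠ w in nhds z, f w = 0)) : ZeroOrder f z (orderNat f z) := by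
  have hord : analyticOrderAt f z ≠ ⊤ := fun h => hne (analyticOrderAt_eq_top.mp h)
  have h2 : analyticOrderAt f z = ((analyticOrderAt f z).toNat : ℕ∞) := (ENat.coe_toNat hord).symm
  rw [hA.analyticOrderAt_eq_natCast] at h2
  obtain ⟨g, hg, hgz, hev⟩ := h2
  refine ⟨g, hg, hgz, ?_⟩
  have hd : orderNat f z = (analyticOrderAt f z).toNat := by rw [orderNat, dif_pos hA]
  rw [hd]
  filter_upwards [hev] with w hw using by simpa [smul_eq_mul] using hw

lemma arg_principle {f : ℂ → ℂ} {a : ℂ} {r R : ℝ} (hr : 0 < r) (hrR : r < R)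
    (hf : AnalyticOnNhd ℂ f (Metric.ball a R))
    (hsph : ∀ z : ℂ, dist z a = r → f z ≠ 0) :
    {z | z ∈ Metric.closedBall a r ∧ f z = 0}.Finite ∧
    (∀ l ∈ Metric.closedBall a r, ZeroOrder f l (orderNat f l)) ∧
    (∮ z in C(a, r), deriv f z / f z) = (2 * Real.pi * Complex.I) * (zeroCount f a r : ℂ) := by
  classical
  have hball : Metric.closedBall a r ⊆ Metric.ball a R := Metric.closedBall_subset_ball hrR
  have hnev := not_eventually_zero hr hrR hf hsph
  set S := {z | z ∈ Metric.closedBall a r ∧ f z = 0} with hSdef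
  -- finiteness of the zero set
  have hSfin : S.Finite := by
    by_contra hinf
    obtain ⟨x, hxK, hacc⟩ := Set.Infinite.exists_accPt_of_subset_isCompact hinf
      (isCompact_closedBall a r) (fun z hz => hz.1)
    rcases (hf x (hball hxK)).eventually_eq_zero_or_eventually_ne_zero with h0 | h1
    · exact hnev x (hball hxK) h0
    · rw [accPt_iff_frequently] at hacc
      have h1' : ∀ᶠ y in nhds x, y ∈ ({x}ᶜ : Set ℂ) → f y ≠ 0 :=
        eventually_nhdsWithin_iff.mp h1
      obtain ⟨y, hy1, hy2⟩ := (hacc.and_eventually h1').exists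
      exact hy2 (Set.mem_compl_singleton_iff.mpr hy1.1) hy1.2.2
  have hZO : ∀ l ∈ Metric.closedBall a r, ZeroOrder f l (orderNat f l) := fun l hl =>
    zeroOrder_orderNat (hf l (hball hl)) (hnev l (hball hl))
  refine ⟨hSfin, hZO, ?_⟩
  -- choose local factorizations
  set n : ℂ → ℕ := orderNat f with hndef
  have H : ∀ s : ℂ, ∃ g : ℂ → ℂ, s ∈ Metric.closedBall a r →
      AnalyticAt ℂ g s ∧ g s ≠ 0 ∧ ∀ᶠ z in nhds s, f z = (z - s) ^ n s * g z := by
    intro s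
    by_cases hs : s ∈ Metric.closedBall a r
    · obtain ⟨g, h1, h2, h3⟩ := hZO s hs
      exact ⟨g, fun _ => ⟨h1, h2, h3⟩⟩
    · exact ⟨0, fun h => absurd h hs⟩
  choose gg hgg using H
  set Z : Finset ℂ := hSfin.toFinset with hZdef
  have hmemZ : ∀ {z : ℂ}, z ∈ Z ↔ z ∈ Metric.closedBall a r ∧ f z = 0 := by
    intro z; rw [hZdef, Set.Finite.mem_toFinset]; exact Iff.rfl
  have hZball : ∀ s ∈ Z, s ∈ Metric.ball a r := by
    intro s hs
    rcases hmemZ.mp hs with ⟨h1, h2⟩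
    rcases lt_or_eq_of_le (Metric.mem_closedBall.mp h1) with h | h
    · exact Metric.mem_ball.mpr h
    · exact absurd h2 (hsph s h)
  set P : ℂ → ℂ := fun z => ∏ s ∈ Z, (z - s) ^ n s with hPdef
  have hPan : ∀ z : ℂ, AnalyticAt ℂ P z := fun z =>
    Finset.analyticAt_fun_prod Z fun s _ => ((analyticAt_id.sub analyticAt_const).pow _)
  have hPne : ∀ z : ℂ, z ∉ Z → P z ≠ 0 := by
    intro z hz
    show (∏ s ∈ Z, (z - s) ^ n s) ≠ 0
    exact Finset.prod_ne_zero_iff.mpr fun s hs =>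
      pow_ne_zero _ (sub_ne_zero.mpr (fun h => hz (by rw [h]; exact hs)))
  have hn1 : ∀ s ∈ Z, n s ≠ 0 := by
    intro s hs hn0
    rcases hmemZ.mp hs with ⟨h1, h2⟩
    obtain ⟨hga, hgn, hge⟩ := hgg s h1
    have h3 := hge.self_of_nhds
    rw [hn0, pow_zero, one_mul] at h3
    exact hgn (by rw [← h3]; exact h2)
  have hPz : ∀ s ∈ Z, P s = 0 := by
    intro s hs
    show (∏ t ∈ Z, (s - t) ^ n t) = 0
    exact Finset.prod_eq_zero hs (by simp [hn1 s hs])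
  set g : ℂ → ℂ := fun z =>
    if z ∈ Z then gg z z / ∏ s ∈ Z.erase z, (z - s) ^ n s else f z / P z with hgdef
  have hfPg : ∀ z : ℂ, f z = P z * g z := by
    intro z
    by_cases hz : z ∈ Z
    · rw [(hmemZ.mp hz).2, hPz z hz, zero_mul]
    · show f z = P z * (if z ∈ Z then _ else f z / P z)
      rw [if_neg hz, mul_div_cancel₀ _ (hPne z hz)]
  have hgan : AnalyticOnNhd ℂ g (Metric.ball a R) := by
    intro z₀ hz₀
    by_cases hz : z₀ ∈ Z
    · obtain ⟨hga, hgn, hge⟩ := hgg z₀ (hmemZ.mp hz).1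
      have herase : ∀ s ∈ Z.erase z₀, z₀ - s ≠ 0 := fun s hs =>
        sub_ne_zero.mpr (fun h => (Finset.mem_erase.mp hs).1 h.symm)
      have hQan : AnalyticAt ℂ (fun z => ∏ s ∈ Z.erase z₀, (z - s) ^ n s) z₀ :=
        Finset.analyticAt_fun_prod _ fun s _ => ((analyticAt_id.sub analyticAt_const).pow _)
      have hQne : (∏ s ∈ Z.erase z₀, (z₀ - s) ^ n s) ≠ 0 :=
        Finset.prod_ne_zero_iff.mpr fun s hs => pow_ne_zero _ (herase s hs)
      have hφ : AnalyticAt ℂ (fun z => gg z₀ z / ∏ s ∈ Z.erase z₀, (z - s) ^ n s) z₀ :=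
        hga.div hQan hQne
      apply hφ.congr
      have hop : ∀ᶠ z in nhds z₀, z ∉ (Z.erase z₀ : Finset ℂ) := by
        have : IsOpen ((↑(Z.erase z₀) : Set ℂ)ᶜ) := (Z.erase z₀).finite_toSet.isClosed.isOpen_compl
        exact this.eventually_mem (by simp)
      filter_upwards [hop, hge] with z hz1 hz2
      by_cases hzz : z = z₀
      · subst hzz
        show _ = (if z ∈ Z then gg z z / _ else _)
        rw [if_pos hz]
      · have hzZ : z ∉ Z := fun hmem => hz1 (Finset.mem_erase.mpr ⟨hzz, hmem⟩)
        show _ = (if z ∈ Z then _ else f z / P z)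
        rw [if_neg hzZ, hz2]
        have hPz' : P z = (z - z₀) ^ n z₀ * ∏ s ∈ Z.erase z₀, (z - s) ^ n s :=
          (Finset.mul_prod_erase Z (fun t => (z - t) ^ n t) hz).symm
        rw [hPz', mul_div_mul_left _ _ (pow_ne_zero _ (sub_ne_zero.mpr hzz))]
    · have hp : AnalyticAt ℂ (fun z => f z / P z) z₀ :=
        (hf z₀ hz₀).div (hPan z₀) (hPne z₀ hz)
      apply hp.congr
      have hop : ∀ᶠ z in nhds z₀, z ∉ (Z : Finset ℂ) := by
        have : IsOpen ((↑Z : Set ℂ)ᶜ) := Z.finite_toSet.isClosed.isOpen_compl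
        exact this.eventually_mem (by simpa using hz)
      filter_upwards [hop] with z hz1
      show _ = (if z ∈ Z then _ else f z / P z)
      rw [if_neg hz1]
  have hgne : ∀ z ∈ Metric.closedBall a r, g z ≠ 0 := by
    intro z hz
    by_cases hzZ : z ∈ Z
    · obtain ⟨hga, hgn, hge⟩ := hgg z (hmemZ.mp hzZ).1
      show (if z ∈ Z then gg z z / ∏ s ∈ Z.erase z, (z - s) ^ n s else f z / P z) ≠ 0
      rw [if_pos hzZ]
      exact div_ne_zero hgn (Finset.prod_ne_zero_iff.mpr fun s hs =>
        pow_ne_zero _ (sub_ne_zero.mpr fun h => (Finset.mem_erase.mp hs).1 h.symm))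
    · have hfz : f z ≠ 0 := fun h0 => hzZ (hmemZ.mpr ⟨hz, h0⟩)
      show (if z ∈ Z then gg z z / ∏ s ∈ Z.erase z, (z - s) ^ n s else f z / P z) ≠ 0
      rw [if_neg hzZ]
      exact div_ne_zero hfz (hPne z hzZ)
  -- the region where g is nonvanishing
  have hWopen : IsOpen {z : ℂ | z ∈ Metric.ball a R ∧ g z ≠ 0} := by
    rw [isOpen_iff_mem_nhds]
    rintro z ⟨hz1, hz2⟩
    have h1 : ∀ᶠ w in nhds z, w ∈ Metric.ball a R := Metric.isOpen_ball.eventually_mem hz1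
    have h2 : ∀ᶠ w in nhds z, g w ≠ 0 := (hgan z hz1).continuousAt.eventually_ne hz2
    filter_upwards [h1, h2] with w hw1 hw2 using ⟨hw1, hw2⟩
  have hcbW : Metric.closedBall a r ⊆ {z : ℂ | z ∈ Metric.ball a R ∧ g z ≠ 0} :=
    fun z hz => ⟨hball hz, hgne z hz⟩
  have hdiffW : ∀ z ∈ {z : ℂ | z ∈ Metric.ball a R ∧ g z ≠ 0},
      DifferentiableAt ℂ (fun w => deriv g w / g w) z := by
    rintro z ⟨hz1, hz2⟩
    exact ((hgan.deriv z hz1).differentiableAt).div ((hgan z hz1).differentiableAt) hz2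
  have hint0 : (∮ z in C(a, r), deriv g z / g z) = 0 := by
    apply Complex.circleIntegral_eq_zero_of_differentiable_on_off_countable hr.le
      Set.countable_empty
    · exact fun z hz => ((hdiffW z (hcbW hz)).continuousAt).continuousWithinAt
    · exact fun z hz => hdiffW z (hcbW (Metric.ball_subset_closedBall hz.1))
  -- pointwise identity on the circle
  have hpt : ∀ z ∈ Metric.sphere a r,
      deriv f z / f z = (∑ s ∈ Z, (n s : ℂ) / (z - s)) + deriv g z / g z := by
    intro z hz
    have hzd : dist z a = r := Metric.mem_sphere.mp hz
    have hzZ : z ∉ Z := fun hmem => hsph z hzd (hmemZ.mp hmem).2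
    have hzcb : z ∈ Metric.closedBall a r := Metric.mem_closedBall.mpr hzd.le
    have hgz : g z ≠ 0 := hgne z hzcb
    have hfeq : f = fun w => P w * g w := funext hfPg
    have hzball : z ∈ Metric.ball a R := hball hzcb
    have hgd : DifferentiableAt ℂ g z := (hgan z hzball).differentiableAt
    have hPd : DifferentiableAt ℂ P z := (hPan z).differentiableAt
    have key : logDeriv f z = (∑ s ∈ Z, (n s : ℂ) / (z - s)) + logDeriv g z := by
      rw [hfeq, logDeriv_mul z (hPne z hzZ) hgz hPd hgd]
      congr 1
      have hfac : ∀ s ∈ Z, (fun w : ℂ => (w - s) ^ n s) z ≠ 0 := fun s hs =>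
        pow_ne_zero _ (sub_ne_zero.mpr fun h => hzZ (by rw [h]; exact hs))
      have hdif : ∀ s ∈ Z, DifferentiableAt ℂ (fun w : ℂ => (w - s) ^ n s) z := fun s _ => by
        fun_prop
      calc logDeriv P z
          = ∑ s ∈ Z, logDeriv (fun w : ℂ => (w - s) ^ n s) z :=
            logDeriv_prod (s := Z) (f := fun s (w : ℂ) => (w - s) ^ n s) (x := z) hfac hdif
        _ = ∑ s ∈ Z, (n s : ℂ) / (z - s) := by
            refine Finset.sum_congr rfl fun s hs => ?_
            have h4 : logDeriv (fun w : ℂ => (w - s) ^ n s) z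
                = (n s : ℂ) * logDeriv (fun w : ℂ => w - s) z :=
              logDeriv_fun_pow (by fun_prop) (n s)
            have h5 : logDeriv (fun w : ℂ => w - s) z = 1 / (z - s) := by
              rw [logDeriv_apply, deriv_sub_const, deriv_id'']
            rw [h4, h5, mul_one_div]
    have h1 : deriv f z / f z = logDeriv f z := (logDeriv_apply f z).symm
    have h2 : deriv g z / g z = logDeriv g z := (logDeriv_apply g z).symm
    rw [h1, h2, key]
  -- integrate
  have hi1 : ∀ s ∈ Z, CircleIntegrable (fun z => (n s : ℂ) / (z - s)) a r := by
    intro s hs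
    apply ContinuousOn.circleIntegrable hr.le
    apply ContinuousOn.div continuousOn_const (continuousOn_id.sub continuousOn_const)
    intro z hz
    refine sub_ne_zero.mpr fun h => ?_
    have h1 : dist s a < r := Metric.mem_ball.mp (hZball s hs)
    have h2 : dist z a = r := Metric.mem_sphere.mp hz
    rw [← show z = s from h] at h1; exact absurd h2 (ne_of_lt h1)
  have hi2 : CircleIntegrable (fun z => deriv g z / g z) a r := by
    apply ContinuousOn.circleIntegrable hr.le
    exact fun z hz => ((hdiffW z (hcbW (Metric.sphere_subset_closedBall hz))).continuousAt).continuousWithinAt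
  calc (∮ z in C(a, r), deriv f z / f z)
      = ∮ z in C(a, r), ((∑ s ∈ Z, (n s : ℂ) / (z - s)) + deriv g z / g z) :=
        circleIntegral.integral_congr hr.le (fun z hz => hpt z hz)
    _ = (∮ z in C(a, r), (∑ s ∈ Z, (n s : ℂ) / (z - s))) + ∮ z in C(a, r), deriv g z / g z :=
        circleIntegral_add' (circleIntegrable_sum' Z hi1) hi2
    _ = ∑ s ∈ Z, ∮ z in C(a, r), (n s : ℂ) / (z - s) := by
        rw [hint0, add_zero, circleIntegral_finset_sum' Z hi1]
    _ = ∑ s ∈ Z, (n s : ℂ) * (2 * Real.pi * Complex.I) := by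
        apply Finset.sum_congr rfl
        intro s hs
        have : (fun z : ℂ => (n s : ℂ) / (z - s)) = fun z => (n s : ℂ) * (z - s)⁻¹ := by
          funext z; rw [div_eq_mul_inv]
        rw [this, circleIntegral.integral_const_mul,
          circleIntegral.integral_sub_inv_of_mem_ball (hZball s hs)]
    _ = (2 * Real.pi * Complex.I) * (zeroCount f a r : ℂ) := by
        rw [← Finset.sum_mul, mul_comm]
        congr 1
        rw [zeroCount_eq hSfin]
        push_cast
        rfl

lemma analytic_phi {m : ℕ} {F G : ℂ → Matrix (Fin m) (Fin m) ℂ} {V : Set ℂ}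
    (hF : AnalyticOnNhd ℂ F V) (hG : AnalyticOnNhd ℂ G V) :
    AnalyticOnNhd ℂ (fun p : ℂ × ℂ => (F p.2 + p.1 • G p.2).det)
      ((Set.univ : Set ℂ) ×ˢ V) := by
  apply analyticOnNhd_det
  intro p hp
  have hFa : AnalyticAt ℂ (fun q : ℂ × ℂ => F q.2) p :=
    (hF p.2 hp.2).comp ((ContinuousLinearMap.snd ℂ ℂ ℂ).analyticAt p)
  have hGa : AnalyticAt ℂ (fun q : ℂ × ℂ => G q.2) p :=
    (hG p.2 hp.2).comp ((ContinuousLinearMap.snd ℂ ℂ ℂ).analyticAt p)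
  have hfst : AnalyticAt ℂ (fun q : ℂ × ℂ => q.1) p :=
    (ContinuousLinearMap.fst ℂ ℂ ℂ).analyticAt p
  exact hFa.add (hfst.smul hGa)

lemma det_ne_zero_of_bound {m : ℕ} (F G : ℂ → Matrix (Fin m) (Fin m) ℂ) (l : ℂ)
    (hinv : IsUnit (F l)) (hb : ‖G l * (F l)⁻¹‖ < 1) {t : ℝ} (ht : t ∈ Set.Icc (0:ℝ) 1) :
    (F l + (t : ℂ) • G l).det ≠ 0 := by
  haveI : CompleteSpace (Matrix (Fin m) (Fin m) ℂ) := FiniteDimensional.complete ℂ _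
  have hdet : IsUnit (F l).det := (Matrix.isUnit_iff_isUnit_det _).mp hinv
  have hn : ‖-((t : ℂ) • (G l * (F l)⁻¹))‖ < 1 := by
    rw [norm_neg, norm_smul]
    calc ‖(t : ℂ)‖ * ‖G l * (F l)⁻¹‖ ≤ 1 * ‖G l * (F l)⁻¹‖ := by
          apply mul_le_mul_of_nonneg_right _ (norm_nonneg _)
          rw [Complex.norm_real, Real.norm_eq_abs, abs_of_nonneg ht.1]
          exact ht.2
      _ < 1 := by rw [one_mul]; exact hb
  have hu : IsUnit ((1 : Matrix (Fin m) (Fin m) ℂ) + (t : ℂ) • (G l * (F l)⁻¹)) := by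
    have := (Units.oneSub (-((t : ℂ) • (G l * (F l)⁻¹))) hn).isUnit
    rwa [Units.val_oneSub, sub_neg_eq_add] at this
  have heq : F l + (t : ℂ) • G l
      = ((1 : Matrix (Fin m) (Fin m) ℂ) + (t : ℂ) • (G l * (F l)⁻¹)) * F l := by
    rw [add_mul, one_mul, smul_mul_assoc, mul_assoc, Matrix.nonsing_inv_mul _ hdet, mul_one]
  rw [heq]
  have : IsUnit ((((1 : Matrix (Fin m) (Fin m) ℂ) + (t : ℂ) • (G l * (F l)⁻¹)) * F l).det) :=
    (Matrix.isUnit_iff_isUnit_det _).mp (hu.mul hinv)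
  exact isUnit_iff_ne_zero.mp this


/-- Proposition 1: matrix version of Rouché's theorem. -/
theorem matrix_rouche
    (m : ℕ) (a : ℂ) (r : ℝ) (hr : 0 < r)
    (F G : ℂ → Matrix (Fin m) (Fin m) ℂ)
    (U : Set ℂ) (hU : IsOpen U) (hUball : Metric.closedBall a r ⊆ U)
    (hF : AnalyticOnNhd ℂ F U) (hG : AnalyticOnNhd ℂ G U)
    (hinv : ∀ l : ℂ, dist l a = r → IsUnit (F l))
    (hbound : ∀ l : ℂ, dist l a = r → ‖G l * (F l)⁻¹‖ < 1) :
    ∃ dF dG : ℂ → ℕ,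
      (∀ l ∈ Metric.closedBall a r, ZeroOrder (fun w => (F w).det) l (dF l)) ∧
      (∀ l ∈ Metric.closedBall a r, ZeroOrder (fun w => (F w + G w).det) l (dG l)) ∧
      (∀ l : ℂ, dist l a = r → (F l).det ≠ 0 ∧ (F l + G l).det ≠ 0) ∧
      ∃ ZF ZG : Finset ℂ,
        (∀ l : ℂ, l ∈ ZF ↔ l ∈ Metric.ball a r ∧ (F l).det = 0) ∧
        (∀ l : ℂ, l ∈ ZG ↔ l ∈ Metric.ball a r ∧ (F l + G l).det = 0) ∧
        ∑ l ∈ ZF, dF l = ∑ l ∈ ZG, dG l := by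
  classical
  haveI : CompleteSpace (Matrix (Fin m) (Fin m) ℂ) := FiniteDimensional.complete ℂ _
  obtain ⟨δ, hδ, hsub⟩ := (isCompact_closedBall a r).exists_cthickening_subset_open hU hUball
  set R := δ + r with hRdef
  have hrR : r < R := by rw [hRdef]; linarith
  have hballU : Metric.ball a R ⊆ U := fun z hz => hsub (by
    rw [cthickening_closedBall hδ.le hr.le]
    exact Metric.ball_subset_closedBall hz)
  have hFb : AnalyticOnNhd ℂ F (Metric.ball a R) := hF.mono hballU
  have hGb : AnalyticOnNhd ℂ G (Metric.ball a R) := hG.mono hballU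
  set Φ : ℂ × ℂ → ℂ := fun p => (F p.2 + p.1 • G p.2).det with hΦdef
  have hΦ : AnalyticOnNhd ℂ Φ ((Set.univ : Set ℂ) ×ˢ Metric.ball a R) := analytic_phi hFb hGb
  have hslice : ∀ t : ℂ, AnalyticOnNhd ℂ (fun z => Φ (t, z)) (Metric.ball a R) := by
    intro t z hz
    exact (hΦ (t, z) ⟨trivial, hz⟩).comp (analyticAt_const.prod analyticAt_id)
  have hphi0 : (fun z => Φ (((0:ℝ) : ℂ), z)) = fun w => (F w).det := by
    funext w; simp [hΦdef]
  have hphi1 : (fun z => Φ (((1:ℝ) : ℂ), z)) = fun w => (F w + G w).det := by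
    funext w; simp [hΦdef]
  have hnz : ∀ t : ℝ, t ∈ Set.Icc (0:ℝ) 1 → ∀ z : ℂ, dist z a = r → Φ ((t : ℂ), z) ≠ 0 :=
    fun t ht z hzd => det_ne_zero_of_bound F G z (hinv z hzd) (hbound z hzd) ht
  have hsph0 : ∀ z : ℂ, dist z a = r → (F z).det ≠ 0 := by
    intro z hz
    have := hnz 0 (by norm_num) z hz
    rwa [show Φ (((0:ℝ):ℂ), z) = (F z).det from congrFun hphi0 z] at this
  have hsph1 : ∀ z : ℂ, dist z a = r → (F z + G z).det ≠ 0 := by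
    intro z hz
    have := hnz 1 (by norm_num) z hz
    rwa [show Φ (((1:ℝ):ℂ), z) = (F z + G z).det from congrFun hphi1 z] at this
  have hAP : ∀ t : ℝ, t ∈ Set.Icc (0:ℝ) 1 →
      {z | z ∈ Metric.closedBall a r ∧ Φ ((t:ℂ), z) = 0}.Finite ∧
      (∀ l ∈ Metric.closedBall a r, ZeroOrder (fun z => Φ ((t:ℂ), z)) l
        (orderNat (fun z => Φ ((t:ℂ), z)) l)) ∧
      (∮ z in C(a, r), deriv (fun w => Φ ((t:ℂ), w)) z / Φ ((t:ℂ), z))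
        = (2 * Real.pi * Complex.I) * (zeroCount (fun z => Φ ((t:ℂ), z)) a r : ℂ) :=
    fun t ht => arg_principle hr hrR (hslice _) (hnz t ht)
  set D : ℂ × ℂ → ℂ := fun p => fderiv ℂ Φ p (0, 1) with hDdef
  have hDcont : ContinuousOn D ((Set.univ : Set ℂ) ×ˢ Metric.ball a R) :=
    (hΦ.fderiv.continuousOn).clm_apply continuousOn_const
  have hderiv_eq : ∀ (t z : ℂ), z ∈ Metric.ball a R →
      deriv (fun w => Φ (t, w)) z = D (t, z) := by
    intro t z hz
    have hΦd : HasFDerivAt Φ (fderiv ℂ Φ (t, z)) (t, z) :=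
      ((hΦ (t, z) ⟨trivial, hz⟩).differentiableAt).hasFDerivAt
    have hι : HasDerivAt (fun w : ℂ => (t, w)) ((0 : ℂ), (1 : ℂ)) z :=
      (hasDerivAt_const z t).prodMk (hasDerivAt_id z)
    exact (hΦd.comp_hasDerivAt z hι).deriv
  set c : ℝ → ℝ := fun t => max 0 (min 1 t) with hcdef
  have hc01 : ∀ t, c t ∈ Set.Icc (0:ℝ) 1 := fun t =>
    ⟨le_max_left _ _, max_le zero_le_one (min_le_left _ _)⟩
  have hccont : Continuous c := continuous_const.max (continuous_const.min continuous_id)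
  have hc0 : c 0 = 0 := by simp [hcdef]
  have hc1 : c 1 = 1 := by simp [hcdef]
  set ν : ℝ → ℕ := fun t => zeroCount (fun z => Φ (((c t : ℝ) : ℂ), z)) a r with hνdef
  set Ψ : ℝ → ℂ := fun t =>
    (2 * Real.pi * Complex.I)⁻¹ *
      ∮ z in C(a, r), D (((c t : ℝ) : ℂ), z) / Φ (((c t : ℝ) : ℂ), z) with hΨdef
  have h2πi : (2 * Real.pi * Complex.I : ℂ) ≠ 0 := by
    simp [Real.pi_ne_zero, Complex.I_ne_zero]
  have hΨval : ∀ t : ℝ, Ψ t = (ν t : ℂ) := by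
    intro t
    have h1 := (hAP (c t) (hc01 t)).2.2
    have h2 : (∮ z in C(a, r), D (((c t : ℝ) : ℂ), z) / Φ (((c t : ℝ) : ℂ), z))
        = ∮ z in C(a, r), deriv (fun w => Φ (((c t : ℝ) : ℂ), w)) z
            / Φ (((c t : ℝ) : ℂ), z) := by
      apply circleIntegral.integral_congr hr.le
      intro z hz
      exact congrArg (· / Φ (((c t : ℝ) : ℂ), z))
        (hderiv_eq _ z (Metric.closedBall_subset_ball hrR
          (Metric.sphere_subset_closedBall hz))).symm
    show (2 * Real.pi * Complex.I)⁻¹ * _ = _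
    rw [h2, h1, inv_mul_cancel_left₀ h2πi]
  have hΨcont : Continuous Ψ := by
    apply Continuous.mul continuous_const
    have heq : (fun t : ℝ => ∮ z in C(a, r), D (((c t : ℝ) : ℂ), z) / Φ (((c t : ℝ) : ℂ), z))
        = fun t : ℝ => ∫ θ in (0:ℝ)..(2 * Real.pi),
            deriv (circleMap a r) θ • (D (((c t : ℝ) : ℂ), circleMap a r θ) /
              Φ (((c t : ℝ) : ℂ), circleMap a r θ)) := rfl
    rw [heq]
    apply intervalIntegral.continuous_parametric_intervalIntegral_of_continuous'
    have he : Continuous (fun q : ℝ × ℝ => ((((c q.1 : ℝ)) : ℂ), circleMap a r q.2)) :=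
      (Complex.continuous_ofReal.comp (hccont.comp continuous_fst)).prodMk
        ((continuous_circleMap a r).comp continuous_snd)
    have hmem : ∀ q : ℝ × ℝ, ((((c q.1 : ℝ)) : ℂ), circleMap a r q.2) ∈
        ((Set.univ : Set ℂ) ×ˢ Metric.ball a R) := fun q =>
      ⟨trivial, Metric.closedBall_subset_ball hrR
        (Metric.sphere_subset_closedBall (circleMap_mem_sphere a hr.le q.2))⟩
    have hDc : Continuous fun q : ℝ × ℝ => D ((((c q.1 : ℝ)) : ℂ), circleMap a r q.2) :=
      hDcont.comp_continuous he hmem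
    have hΦc : Continuous fun q : ℝ × ℝ => Φ ((((c q.1 : ℝ)) : ℂ), circleMap a r q.2) :=
      (hΦ.continuousOn).comp_continuous he hmem
    have hΦne : ∀ q : ℝ × ℝ, Φ ((((c q.1 : ℝ)) : ℂ), circleMap a r q.2) ≠ 0 := fun q =>
      hnz (c q.1) (hc01 q.1) _ (Metric.mem_sphere.mp (circleMap_mem_sphere a hr.le q.2))
    have hdc : Continuous fun θ : ℝ => deriv (circleMap a r) θ := by
      simp only [deriv_circleMap]
      exact (continuous_circleMap 0 r).mul continuous_const
    exact ((hdc.comp continuous_snd).smul (hDc.div hΦc hΦne))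
  -- the count is constant along the homotopy
  have hνconst : ν 0 = ν 1 := by
    have huval : ∀ t, (Ψ t).re = (ν t : ℝ) := by intro t; rw [hΨval t]; simp
    have hu : Continuous fun t => (Ψ t).re := Complex.continuous_re.comp hΨcont
    by_contra hne
    rcases lt_or_gt_of_ne hne with hlt | hgt
    · have hmid : ((ν 0 : ℝ) + 1/2) ∈ Set.Icc ((Ψ (0:ℝ)).re) ((Ψ (1:ℝ)).re) := by
        rw [huval 0, huval 1]
        constructor
        · linarith
        · have : (ν 0 : ℝ) + 1 ≤ (ν 1 : ℝ) := by exact_mod_cast hlt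
          linarith
      obtain ⟨t, _, hteq⟩ := intermediate_value_Icc zero_le_one hu.continuousOn hmid
      have hteq' : (Ψ t).re = (ν 0 : ℝ) + 1/2 := hteq
      rw [huval t] at hteq'
      have h2 : (2 * ν t : ℝ) = 2 * (ν 0 : ℝ) + 1 := by linarith [hteq']
      have h3 : 2 * ν t = 2 * ν 0 + 1 := by exact_mod_cast h2
      omega
    · have hmid : ((ν 1 : ℝ) + 1/2) ∈ Set.Icc ((Ψ (1:ℝ)).re) ((Ψ (0:ℝ)).re) := by
        rw [huval 0, huval 1]
        constructor
        · linarith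
        · have : (ν 1 : ℝ) + 1 ≤ (ν 0 : ℝ) := by exact_mod_cast hgt
          linarith
      obtain ⟨t, _, hteq⟩ := intermediate_value_Icc' zero_le_one hu.continuousOn hmid
      have hteq' : (Ψ t).re = (ν 1 : ℝ) + 1/2 := hteq
      rw [huval t] at hteq'
      have h2 : (2 * ν t : ℝ) = 2 * (ν 1 : ℝ) + 1 := by linarith [hteq']
      have h3 : 2 * ν t = 2 * ν 1 + 1 := by exact_mod_cast h2
      omega
  -- endpoints
  have hap0 := arg_principle hr hrR
    (show AnalyticOnNhd ℂ (fun w => (F w).det) (Metric.ball a R) from analyticOnNhd_det hFb)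
    hsph0
  have hap1 := arg_principle hr hrR
    (show AnalyticOnNhd ℂ (fun w => (F w + G w).det) (Metric.ball a R) from
      analyticOnNhd_det (hFb.add hGb))
    hsph1
  have hν0 : ν 0 = zeroCount (fun w => (F w).det) a r := by
    show zeroCount (fun z => Φ (((c 0 : ℝ) : ℂ), z)) a r = _
    rw [hc0, hphi0]
  have hν1 : ν 1 = zeroCount (fun w => (F w + G w).det) a r := by
    show zeroCount (fun z => Φ (((c 1 : ℝ) : ℂ), z)) a r = _
    rw [hc1, hphi1]
  refine ⟨orderNat (fun w => (F w).det), orderNat (fun w => (F w + G w).det),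
    hap0.2.1, hap1.2.1, fun l hl => ⟨hsph0 l hl, hsph1 l hl⟩,
    hap0.1.toFinset, hap1.1.toFinset, ?_, ?_, ?_⟩
  · intro l
    rw [Set.Finite.mem_toFinset]
    constructor
    · rintro ⟨h1, h2⟩
      refine ⟨?_, h2⟩
      rcases lt_or_eq_of_le (Metric.mem_closedBall.mp h1) with h | h
      · exact Metric.mem_ball.mpr h
      · exact absurd h2 (hsph0 l h)
    · rintro ⟨h1, h2⟩
      exact ⟨Metric.ball_subset_closedBall h1, h2⟩
  · intro l
    rw [Set.Finite.mem_toFinset]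
    constructor
    · rintro ⟨h1, h2⟩
      refine ⟨?_, h2⟩
      rcases lt_or_eq_of_le (Metric.mem_closedBall.mp h1) with h | h
      · exact Metric.mem_ball.mpr h
      · exact absurd h2 (hsph1 l h)
    · rintro ⟨h1, h2⟩
      exact ⟨Metric.ball_subset_closedBall h1, h2⟩
  · have e0 : zeroCount (fun w => (F w).det) a r
        = ∑ l ∈ hap0.1.toFinset, orderNat (fun w => (F w).det) l := zeroCount_eq hap0.1
    have e1 : zeroCount (fun w => (F w + G w).det) a r
        = ∑ l ∈ hap1.1.toFinset, orderNat (fun w => (F w + G w).det) l := zeroCount_eq hap1.1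
    rw [← e0, ← e1, ← hν0, ← hν1, hνconst]


end MatrixSturmLiouville
end
end

section
/- Let k ∈ ℕ and let (δ_n)_{n≥1}, (γ_n)_{n≥1} be sequences of nonzero complex numbers such that for every n, δ_n^k + a_{1,n} δ_n^{k−1} + a_{2,n} δ_n^{k−2} + ⋯ + a_{k−1,n} δ_n + a_{k,n} = 0, where for each j = 1,…,k the coefficients decompose as a_{j,n} = Σ_{l=0}^{j} b_{j,l,n} with b_{j,l,n}/(γ_n^l δ_n^{j−l}) → 0 as n → ∞ for every l = 0,…,j. Then δ_n = O(γ_n) as n → ∞, i.e. there exists a constant C such that |δ_n| ≤ C|γ_n| for all sufficiently large n. -/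
open MeasureTheory Filter Matrix Set
open scoped Matrix.Norms.L2Operator

noncomputable section

namespace MatrixSturmLiouville

/-- Proposition 2: an estimate for roots of polynomials with
asymptotically small coefficients. -/
theorem polynomial_root_estimate
    (k : ℕ) (δ γ : ℕ → ℂ)
    (hδ : ∀ n : ℕ, 1 ≤ n → δ n ≠ 0) (hγ : ∀ n : ℕ, 1 ≤ n → γ n ≠ 0)
    (a : ℕ → ℕ → ℂ) (b : ℕ → ℕ → ℕ → ℂ)
    (hab : ∀ j : ℕ, 1 ≤ j → j ≤ k → ∀ n : ℕ, 1 ≤ n →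
      a j n = ∑ l ∈ Finset.range (j + 1), b j l n)
    (hsmall : ∀ j l : ℕ, 1 ≤ j → j ≤ k → l ≤ j →
      Tendsto (fun n : ℕ => b j l n / (γ n ^ l * δ n ^ (j - l))) atTop (nhds 0))
    (heq : ∀ n : ℕ, 1 ≤ n →
      δ n ^ k + ∑ j ∈ Finset.Icc 1 k, a j n * δ n ^ (k - j) = 0) :
    ∃ C : ℝ, ∀ᶠ n : ℕ in atTop, ‖δ n‖ ≤ C * ‖γ n‖ := by
  classical
  set ε : ℝ := (((k : ℝ) + 1) ^ 2 + 1)⁻¹ with hεdef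
  have hεpos : 0 < ε := by positivity
  have H : ∀ᶠ n in atTop, ∀ j ∈ Finset.Icc 1 k, ∀ l ∈ Finset.range (j + 1),
      ‖b j l n / (γ n ^ l * δ n ^ (j - l))‖ < ε := by
    rw [Filter.eventually_all_finset]
    intro j hj
    rw [Filter.eventually_all_finset]
    intro l hl
    simp only [Finset.mem_Icc] at hj
    simp only [Finset.mem_range] at hl
    have h0 : Tendsto (fun n => ‖b j l n / (γ n ^ l * δ n ^ (j - l))‖) atTop (nhds 0) := by
      simpa using (hsmall j l hj.1 hj.2 (by omega)).norm
    exact h0.eventually_lt_const hεpos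
  refine ⟨1, ?_⟩
  filter_upwards [H, Filter.eventually_ge_atTop 1] with n hn hn1
  rw [one_mul]
  by_contra hlt
  push_neg at hlt
  have hγδ : ‖γ n‖ ≤ ‖δ n‖ := hlt.le
  have hδpos : (0 : ℝ) < ‖δ n‖ := norm_pos_iff.mpr (hδ n hn1)
  have hδkpos : (0 : ℝ) < ‖δ n‖ ^ k := pow_pos hδpos k
  have hnormeq : ‖δ n‖ ^ k = ‖∑ j ∈ Finset.Icc 1 k, a j n * δ n ^ (k - j)‖ := by
    have h1 : δ n ^ k = -(∑ j ∈ Finset.Icc 1 k, a j n * δ n ^ (k - j)) := by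
      linear_combination heq n hn1
    rw [← norm_pow, h1, norm_neg]
  have hterm : ∀ j ∈ Finset.Icc 1 k, ∀ l ∈ Finset.range (j + 1),
      ‖b j l n‖ * ‖δ n‖ ^ (k - j) ≤ ε * ‖δ n‖ ^ k := by
    intro j hj l hl
    simp only [Finset.mem_Icc] at hj
    simp only [Finset.mem_range] at hl
    have hne : γ n ^ l * δ n ^ (j - l) ≠ 0 :=
      mul_ne_zero (pow_ne_zero _ (hγ n hn1)) (pow_ne_zero _ (hδ n hn1))
    have hb : ‖b j l n‖ ≤ ε * (‖γ n‖ ^ l * ‖δ n‖ ^ (j - l)) := by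
      have h2 : ‖b j l n‖ = ‖b j l n / (γ n ^ l * δ n ^ (j - l))‖ *
          (‖γ n‖ ^ l * ‖δ n‖ ^ (j - l)) := by
        rw [← norm_pow, ← norm_pow, ← norm_mul, ← norm_mul, div_mul_cancel₀ _ hne]
      rw [h2]
      have := (hn j (by simp [Finset.mem_Icc]; omega) l (by simp [Finset.mem_range]; omega)).le
      exact mul_le_mul_of_nonneg_right this (by positivity)
    calc ‖b j l n‖ * ‖δ n‖ ^ (k - j)
        ≤ (ε * (‖γ n‖ ^ l * ‖δ n‖ ^ (j - l))) * ‖δ n‖ ^ (k - j) := by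
          exact mul_le_mul_of_nonneg_right hb (by positivity)
      _ ≤ (ε * (‖δ n‖ ^ l * ‖δ n‖ ^ (j - l))) * ‖δ n‖ ^ (k - j) := by
          gcongr
      _ = ε * ‖δ n‖ ^ (l + (j - l) + (k - j)) := by rw [pow_add, pow_add]; ring
      _ = ε * ‖δ n‖ ^ k := by
          have hexp : l + (j - l) + (k - j) = k := by omega
          rw [hexp]
  have hbound : ‖∑ j ∈ Finset.Icc 1 k, a j n * δ n ^ (k - j)‖ ≤
      ((k : ℝ) * (k + 1)) * (ε * ‖δ n‖ ^ k) := by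
    calc ‖∑ j ∈ Finset.Icc 1 k, a j n * δ n ^ (k - j)‖
        ≤ ∑ j ∈ Finset.Icc 1 k, ‖a j n * δ n ^ (k - j)‖ := norm_sum_le _ _
      _ ≤ ∑ j ∈ Finset.Icc 1 k, ((k : ℝ) + 1) * (ε * ‖δ n‖ ^ k) := by
          refine Finset.sum_le_sum fun j hj => ?_
          have hjm := hj
          simp only [Finset.mem_Icc] at hjm
          rw [hab j hjm.1 hjm.2 n hn1, norm_mul, norm_pow]
          calc ‖∑ l ∈ Finset.range (j + 1), b j l n‖ * ‖δ n‖ ^ (k - j)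
              ≤ (∑ l ∈ Finset.range (j + 1), ‖b j l n‖) * ‖δ n‖ ^ (k - j) :=
                mul_le_mul_of_nonneg_right (norm_sum_le _ _) (by positivity)
            _ = ∑ l ∈ Finset.range (j + 1), ‖b j l n‖ * ‖δ n‖ ^ (k - j) :=
                Finset.sum_mul _ _ _
            _ ≤ ∑ l ∈ Finset.range (j + 1), ε * ‖δ n‖ ^ k :=
                Finset.sum_le_sum fun l hl => hterm j hj l hl
            _ = ((j : ℝ) + 1) * (ε * ‖δ n‖ ^ k) := by
                rw [Finset.sum_const, Finset.card_range]; push_cast; ring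
            _ ≤ ((k : ℝ) + 1) * (ε * ‖δ n‖ ^ k) := by
                have : (j : ℝ) ≤ (k : ℝ) := by exact_mod_cast hjm.2
                have hpos : (0 : ℝ) ≤ ε * ‖δ n‖ ^ k := by positivity
                nlinarith
      _ = ((k : ℝ) * (k + 1)) * (ε * ‖δ n‖ ^ k) := by
          rw [Finset.sum_const, Nat.card_Icc]; push_cast; ring
  have hklt : (k : ℝ) * ((k : ℝ) + 1) * ε < 1 := by
    rw [hεdef]
    rw [mul_inv_lt_iff₀ (by positivity), one_mul]
    nlinarith [sq_nonneg ((k : ℝ) + 1), Nat.cast_nonneg (α := ℝ) k]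
  have : ‖δ n‖ ^ k < ‖δ n‖ ^ k := by
    calc ‖δ n‖ ^ k = ‖∑ j ∈ Finset.Icc 1 k, a j n * δ n ^ (k - j)‖ := hnormeq
      _ ≤ ((k : ℝ) * (k + 1)) * (ε * ‖δ n‖ ^ k) := hbound
      _ = ((k : ℝ) * ((k : ℝ) + 1) * ε) * ‖δ n‖ ^ k := by ring
      _ < 1 * ‖δ n‖ ^ k := by exact mul_lt_mul_of_pos_right hklt hδkpos
      _ = ‖δ n‖ ^ k := one_mul _
  exact lt_irrefl _ this

end MatrixSturmLiouville
end
end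

section
/- Let m ≥ 2, let ω̃₁,…,ω̃_m ∈ ℂ, and set ω̃ = diag(ω̃_j)_{j=1}^m, J the all-ones m×m matrix, and T̃⊥ = I_m − J/m. Then for every z ∈ ℂ: det(z I_m − T̃⊥ ω̃ T̃⊥) = (z/m) · Σ_{j=1}^m ∏_{l ≠ j} (z − ω̃_l), i.e. det(z I_m − T̃⊥ ω̃ T̃⊥) equals (z/m) times the derivative of the polynomial ∏_{j=1}^m (z − ω̃_j). -/
open MeasureTheory Filter Matrix Set
open scoped Matrix.Norms.L2Operator

noncomputable section

namespace MatrixSturmLiouville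

/-- `T̃ = J/m`, the orthogonal projector onto the span of `(1, …, 1)`. -/
def allOnesProj (m : ℕ) : Matrix (Fin m) (Fin m) ℂ :=
  Matrix.of fun _ _ => 1 / (m : ℂ)

lemma allOnesProj_idem {m : ℕ} (hm : (m:ℂ) ≠ 0) :
    allOnesProj m * allOnesProj m = allOnesProj m := by
  ext i j
  simp only [allOnesProj, Matrix.mul_apply, Matrix.of_apply, Finset.sum_const,
    Finset.card_univ, Fintype.card_fin, nsmul_eq_mul]
  field_simp

lemma det_generic (m : ℕ) (hm : 2 ≤ m) (ω : Fin m → ℂ) (z : ℂ) (hz : z ≠ 0)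
    (hzω : ∀ j, z - ω j ≠ 0) :
    (z • (1 : Matrix (Fin m) (Fin m) ℂ)
        - (1 - allOnesProj m) * Matrix.diagonal ω * (1 - allOnesProj m)).det
      = (z / m) * ∑ j : Fin m, ∏ l ∈ Finset.univ.erase j, (z - ω l) := by
  have hm0 : (m:ℂ) ≠ 0 := by
    exact_mod_cast Nat.cast_ne_zero.mpr (by omega)
  set Q := allOnesProj m with hQ
  set P : Matrix (Fin m) (Fin m) ℂ := 1 - Q with hPdef
  set D : Matrix (Fin m) (Fin m) ℂ := Matrix.diagonal ω with hD
  have hPP : P * P = P := by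
    simp only [hPdef, Matrix.sub_mul, Matrix.mul_sub, Matrix.one_mul, Matrix.mul_one,
      allOnesProj_idem hm0, hQ]
    abel
  -- Step A : det (z•1 - P*D*P) = det (z•1 - P*D)
  have stepA : (z • (1 : Matrix (Fin m) (Fin m) ℂ) - P * D * P).det
      = (z • (1 : Matrix (Fin m) (Fin m) ℂ) - P * D).det := by
    have key : ∀ A : Matrix (Fin m) (Fin m) ℂ,
        z • (1 : Matrix (Fin m) (Fin m) ℂ) - A = z • (1 - z⁻¹ • A) := by
      intro A
      rw [smul_sub, smul_smul, mul_inv_cancel₀ hz, one_smul]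
    rw [key (P * D * P), key (P * D), Matrix.det_smul, Matrix.det_smul]
    congr 1
    have h1 : z⁻¹ • (P * D * P) = (z⁻¹ • (P * D)) * P := by
      rw [Matrix.smul_mul]
    rw [h1, Matrix.det_one_sub_mul_comm]
    congr 2
    rw [Matrix.mul_smul, ← Matrix.mul_assoc, hPP]
  rw [stepA]
  -- Step B : z•1 - P*D = diagonal (z - ω) + col u * row v
  set d : Fin m → ℂ := fun j => z - ω j with hd
  have stepB : z • (1 : Matrix (Fin m) (Fin m) ℂ) - P * D
      = Matrix.diagonal d + Matrix.replicateCol Unit (fun _ => (1:ℂ)) * Matrix.replicateRow Unit (fun j => ω j / m) := by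
    ext i j
    simp only [hPdef, hD, Matrix.sub_apply, Matrix.smul_apply, Matrix.one_apply,
      Matrix.sub_mul, Matrix.one_mul, Matrix.add_apply, Matrix.diagonal_apply,
      Matrix.mul_apply, Matrix.replicateCol_apply, Matrix.replicateRow_apply, hQ, allOnesProj,
      Matrix.of_apply, hd, Finset.sum_const, Finset.card_univ, Fintype.card_fin,
      smul_eq_mul, one_div, Fintype.sum_unique]
    by_cases hij : i = j <;> simp [hij, mul_ite, Finset.mul_sum] <;> field_simp <;> ring
  rw [stepB]
  -- Step C : matrix determinant lemma
  have hdet : (Matrix.diagonal d).det = ∏ l, d l := Matrix.det_diagonal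
  have hdetne : (Matrix.diagonal d).det ≠ 0 := by
    rw [hdet]; exact Finset.prod_ne_zero_iff.mpr fun j _ => hzω j
  rw [Matrix.det_add_replicateCol_mul_replicateRow (isUnit_iff_ne_zero.mpr hdetne)]
  have hinv : (Matrix.diagonal d)⁻¹ = Matrix.diagonal fun j => (d j)⁻¹ := by
    apply Matrix.inv_eq_right_inv
    rw [Matrix.diagonal_mul_diagonal]
    convert Matrix.diagonal_one using 2
    exact funext fun j => mul_inv_cancel₀ (hzω j)
  rw [hinv, hdet, Matrix.det_unique]
  simp only [Matrix.add_apply, Matrix.one_apply_eq, Matrix.mul_apply, Matrix.replicateRow_apply,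
    Matrix.replicateCol_apply, Matrix.diagonal_apply, Finset.sum_ite_eq, mul_ite, ite_mul,
    zero_mul, mul_zero, Fintype.sum_unique]
  simp only [Finset.sum_ite_eq', Finset.mem_univ, if_true, mul_one]
  have hprod : ∀ j : Fin m, (∏ l, d l) * (d j)⁻¹ = ∏ l ∈ Finset.univ.erase j, d l := by
    intro j
    rw [← Finset.mul_prod_erase Finset.univ d (Finset.mem_univ j), mul_comm (d j),
      mul_assoc, mul_inv_cancel₀ (hzω j), mul_one]
  have key : ∀ j : Fin m, z / m * ∏ l ∈ Finset.univ.erase j, d l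
      = (∏ l, d l) / m + ω j / m * ∏ l ∈ Finset.univ.erase j, d l := by
    intro j
    have hz' : z = d j + ω j := by simp [hd]
    rw [hz', ← Finset.mul_prod_erase Finset.univ d (Finset.mem_univ j)]
    ring
  have hR : z / ↑m * ∑ j : Fin m, ∏ l ∈ Finset.univ.erase j, d l
      = ∑ j : Fin m, ((∏ l, d l) / m + ω j / m * ∏ l ∈ Finset.univ.erase j, d l) := by
    rw [Finset.mul_sum]; exact Finset.sum_congr rfl fun j _ => key j
  rw [hR, Finset.sum_add_distrib, Finset.sum_const, Finset.card_univ, Fintype.card_fin,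
    nsmul_eq_mul, mul_add, mul_one, Finset.mul_sum]
  congr 1
  · field_simp
  · exact Finset.sum_congr rfl fun j _ => by rw [← hprod j]; ring


/-- the characteristic polynomial identity
`det(z I - T̃⊥ ω̃ T̃⊥) = (z/m) · d/dz ∏ (z - ω̃_j)`. -/
theorem det_projected_diagonal
    (m : ℕ) (hm : 2 ≤ m) (ω : Fin m → ℂ) (z : ℂ) :
    (z • (1 : Matrix (Fin m) (Fin m) ℂ)
        - (1 - allOnesProj m) * Matrix.diagonal ω * (1 - allOnesProj m)).det
      = (z / m) * ∑ j : Fin m, ∏ l ∈ Finset.univ.erase j, (z - ω l) := by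
  have hf : Continuous fun w : ℂ => (w • (1 : Matrix (Fin m) (Fin m) ℂ)
      - (1 - allOnesProj m) * Matrix.diagonal ω * (1 - allOnesProj m)).det :=
    Continuous.matrix_det ((continuous_id.smul continuous_const).sub continuous_const)
  have hg : Continuous fun w : ℂ =>
      (w / m) * ∑ j : Fin m, ∏ l ∈ Finset.univ.erase j, (w - ω l) :=
    (continuous_id.div_const _).mul (continuous_finset_sum _ fun j _ =>
      continuous_finset_prod _ fun l _ => continuous_id.sub continuous_const)
  have hdense : Dense (({0} ∪ Set.range ω : Set ℂ)ᶜ) :=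
    Set.Countable.dense_compl ℂ
      (((Set.finite_singleton 0).union (Set.finite_range ω)).countable)
  have heq := Continuous.ext_on hdense hf hg ?_
  · exact congrFun heq z
  · intro w hw
    simp only [Set.mem_compl_iff, Set.mem_union, Set.mem_singleton_iff, Set.mem_range] at hw
    push_neg at hw
    exact det_generic m hm ω w hw.1 fun j => sub_ne_zero.mpr fun h => hw.2 j h.symm


end MatrixSturmLiouville
end
end
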